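/- Let z ∈ ℝ^p be any unit vector and z₀ = x̄/‖x̄‖ the unit mean direction of X ∈ ℝ^{n×p}. If ‖x̄‖² ≥ (σ̄_max² − σ̄_min²) / (n(1 − ⟨z₀, z⟩²)), where σ̄_max² and σ̄_min² are the largest and smallest eigenvalues of X̄ᵀX̄, then ‖Xz‖² ≤ ‖Xz₀‖², i.e., z₀ dominates z in the Rayleigh quotient of XᵀX. -/

import Mathlib

/-!
Write `X = X̄ + 1 x̄ᵀ`. The columns of `X̄` sum to zero, so `X̄w ⟂ 1` and Pythagoras gives
`‖Xw‖² = ‖X̄w‖² + n ⟨x̄, w⟩²` for every `w`. With `⟨x̄, z⟩ = ‖x̄‖ ⟨z₀, z⟩` and `⟨x̄, z₀⟩ = ‖x̄‖`,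
the claim becomes `‖X̄z‖² - ‖X̄z₀‖² ≤ n ‖x̄‖² (1 - ⟨z₀, z⟩²)`, and the left side is at most
`σ̄_max² - σ̄_min²` by the Rayleigh bounds.
-/

open Matrix

section Centering

variable {m ι R : Type*} [Fintype m]

lemma dotProduct_transpose_mul_self_mulVec [Fintype ι] [CommSemiring R] (A : Matrix m ι R)
    (w : ι → R) : w ⬝ᵥ (Aᵀ * A) *ᵥ w = A *ᵥ w ⬝ᵥ A *ᵥ w := by
  rw [← mulVec_mulVec, dotProduct_mulVec, vecMul_transpose]

lemma one_vecMul_sub_vecMulVec_one_eq_zero {X : Matrix m ι ℝ} {μ : ι → ℝ}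
    (hm : Fintype.card m ≠ 0) (hμ : μ = fun j => (∑ i, X i j) / Fintype.card m) :
    (fun _ => 1) ᵥ* (X - vecMulVec (fun _ => 1) μ) = 0 := by
  have hm' : (Fintype.card m : ℝ) ≠ 0 := Nat.cast_ne_zero.mpr hm
  rw [vecMul_sub, vecMul_vecMulVec]
  ext j
  simp [hμ, vecMul, dotProduct, mul_div_cancel₀ _ hm']

lemma add_vecMulVec_one_mulVec_dotProduct_self [Fintype ι] [CommRing R] {Y : Matrix m ι R}
    (hY : (fun _ => 1) ᵥ* Y = 0) (μ w : ι → R) :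
    (Y + vecMulVec (fun _ => 1) μ) *ᵥ w ⬝ᵥ (Y + vecMulVec (fun _ => 1) μ) *ᵥ w =
      Y *ᵥ w ⬝ᵥ Y *ᵥ w + Fintype.card m * (μ ⬝ᵥ w) ^ 2 := by
  have hconst : vecMulVec (fun _ => 1) μ *ᵥ w = (μ ⬝ᵥ w) • fun _ : m => (1 : R) := by
    ext i; simp [vecMulVec_mulVec, mul_comm]
  have horth : (fun _ => 1) ⬝ᵥ Y *ᵥ w = 0 := by rw [dotProduct_mulVec, hY, zero_dotProduct]
  have hone : (fun _ : m => (1 : R)) ⬝ᵥ (fun _ => 1) = Fintype.card m := by simp [dotProduct]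
  rw [add_mulVec, hconst]
  simp only [add_dotProduct, dotProduct_add, dotProduct_smul, smul_dotProduct,
    dotProduct_comm (Y *ᵥ w) (fun _ => 1), horth, hone, smul_eq_mul]
  ring

end Centering

section Normalization

variable {ι : Type*} [Fintype ι]

lemma dotProduct_self_pos {R : Type*} [Ring R] [LinearOrder R] [IsStrictOrderedRing R]
    {v : ι → R} (hv : v ≠ 0) : 0 < v ⬝ᵥ v :=
  (Finset.sum_nonneg fun i _ => mul_self_nonneg (v i)).lt_of_ne
    (Ne.symm (dotProduct_self_eq_zero.not.mpr hv))

variable {v : ι → ℝ}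

lemma inv_sqrt_smul_dotProduct_self (hv : v ≠ 0) :
    (√(v ⬝ᵥ v))⁻¹ • v ⬝ᵥ (√(v ⬝ᵥ v))⁻¹ • v = 1 := by
  have hpos := dotProduct_self_pos hv
  rw [smul_dotProduct, dotProduct_smul, smul_eq_mul, smul_eq_mul, ← mul_assoc, ← mul_inv,
    Real.mul_self_sqrt hpos.le, inv_mul_cancel₀ hpos.ne']

lemma dotProduct_eq_sqrt_mul_inv_sqrt_smul_dotProduct (hv : v ≠ 0) (w : ι → ℝ) :
    v ⬝ᵥ w = √(v ⬝ᵥ v) * ((√(v ⬝ᵥ v))⁻¹ • v ⬝ᵥ w) := by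
  have hpos : 0 < √(v ⬝ᵥ v) := Real.sqrt_pos.mpr (dotProduct_self_pos hv)
  rw [smul_dotProduct, smul_eq_mul, mul_inv_cancel_left₀ hpos.ne']

end Normalization

/-- Let `z` be a unit vector and `z₀ = x̄/‖x̄‖` the unit mean
direction. If `‖x̄‖² ≥ (σ̄_max² − σ̄_min²)/(n(1 − ⟨z₀,z⟩²))`, where `σ̄_max²`
and `σ̄_min²` are the largest and smallest eigenvalues (extreme Rayleigh values)
of `X̄ᵀX̄`, then `‖Xz‖² ≤ ‖Xz₀‖²`. -/
theorem mean_direction_dominates_rayleigh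
    {n p : ℕ} (hn : 0 < n) (X : Matrix (Fin n) (Fin p) ℝ)
    (xbar : Fin p → ℝ) (hxbar : xbar = fun j => (∑ i, X i j) / n)
    (hx : xbar ≠ 0)
    (Xbar : Matrix (Fin n) (Fin p) ℝ) (hXbar : Xbar = X - Matrix.vecMulVec (fun _ => 1) xbar)
    (z₀ : Fin p → ℝ) (hz₀ : z₀ = (Real.sqrt (xbar ⬝ᵥ xbar))⁻¹ • xbar)
    (z : Fin p → ℝ) (hz : z ⬝ᵥ z = 1) (hzz₀ : (z₀ ⬝ᵥ z) ^ 2 < 1)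
    (smax2 smin2 : ℝ)
    (hmax : IsGreatest {r : ℝ | ∃ w : Fin p → ℝ, w ⬝ᵥ w = 1 ∧
      w ⬝ᵥ (Xbarᵀ * Xbar).mulVec w = r} smax2)
    (hmin : IsLeast {r : ℝ | ∃ w : Fin p → ℝ, w ⬝ᵥ w = 1 ∧
      w ⬝ᵥ (Xbarᵀ * Xbar).mulVec w = r} smin2)
    (hbound : xbar ⬝ᵥ xbar ≥ (smax2 - smin2) / (n * (1 - (z₀ ⬝ᵥ z) ^ 2))) :
    (X.mulVec z) ⬝ᵥ (X.mulVec z) ≤ (X.mulVec z₀) ⬝ᵥ (X.mulVec z₀) := by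
  have hcentered : (fun _ => 1) ᵥ* Xbar = 0 :=
    hXbar ▸ one_vecMul_sub_vecMulVec_one_eq_zero (by simpa using hn.ne') (by simpa using hxbar)
  have hX : X = Xbar + vecMulVec (fun _ => 1) xbar := by rw [hXbar, sub_add_cancel]
  have hz₀_unit : z₀ ⬝ᵥ z₀ = 1 := hz₀ ▸ inv_sqrt_smul_dotProduct_self hx
  have hxbar_dot : ∀ w, xbar ⬝ᵥ w = √(xbar ⬝ᵥ xbar) * (z₀ ⬝ᵥ w) := fun w =>
    hz₀ ▸ dotProduct_eq_sqrt_mul_inv_sqrt_smul_dotProduct hx w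
  have hz_max : Xbar *ᵥ z ⬝ᵥ Xbar *ᵥ z ≤ smax2 :=
    dotProduct_transpose_mul_self_mulVec Xbar z ▸ hmax.2 ⟨z, hz, rfl⟩
  have hz₀_min : smin2 ≤ Xbar *ᵥ z₀ ⬝ᵥ Xbar *ᵥ z₀ :=
    dotProduct_transpose_mul_self_mulVec Xbar z₀ ▸ hmin.2 ⟨z₀, hz₀_unit, rfl⟩
  have hgap : smax2 - smin2 ≤ xbar ⬝ᵥ xbar * (n * (1 - (z₀ ⬝ᵥ z) ^ 2)) := by
    have : (0 : ℝ) < n * (1 - (z₀ ⬝ᵥ z) ^ 2) := mul_pos (by exact_mod_cast hn) (by linarith)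
    rwa [ge_iff_le, div_le_iff₀ this] at hbound
  have hsq : √(xbar ⬝ᵥ xbar) ^ 2 = xbar ⬝ᵥ xbar := Real.sq_sqrt (dotProduct_self_pos hx).le
  rw [hX, add_vecMulVec_one_mulVec_dotProduct_self hcentered,
    add_vecMulVec_one_mulVec_dotProduct_self hcentered, hxbar_dot z, hxbar_dot z₀, hz₀_unit,
    Fintype.card_fin]
  linear_combination hz_max + hz₀_min + hgap - n * (1 - (z₀ ⬝ᵥ z) ^ 2) * hsq
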